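/- Fix an integer n₁ ≥ 1 and K ∈ ℝ. In the polynomial ring ℝ[λ₁,…,λ_{n₁},μ₁,…,μ_{n₁}], set τ := (2/3)Σλᵢ, define P₀ := −(4/3)Σλᵢμᵢ² − (2/3)τΣμᵢ² + (4/9)(Σμᵢ)(Σλᵢμᵢ) + (4/3)τΣλᵢ² + (2/9)τ(Σμᵢ)² + (1/2)τ³ − (2/3)(2n+1)Kτ with n := n₁+1, and inductively P_{k+1} := Σᵢ (∂P_k/∂λᵢ)·((τ/2 + λᵢ)μᵢ) + Σᵢ (∂P_k/∂μᵢ)·(μᵢ² − (τ/2)λᵢ + K). Let S ⊆ ℝ^{2n₁} be the set of points (λ⁰, μ⁰) for which there exist ε > 0 and a real-analytic solution (λᵢ, μᵢ) of the system (ODE) on (−ε, ε) with λᵢ(0) = λᵢ⁰ and μᵢ(0) = μᵢ⁰ for all i. Then S = ⋂_{k≥0} P_k⁻¹(0). -/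

import Mathlib

open MvPolynomial

/-- `τ` as a polynomial in the variables `λ₁,…,λ_{n₁}, μ₁,…,μ_{n₁}`
(the `λ` variables are indexed by `Sum.inl`, the `μ` variables by `Sum.inr`). -/
noncomputable def tauPoly (n₁ : ℕ) : MvPolynomial (Fin n₁ ⊕ Fin n₁) ℝ :=
  C (2/3 : ℝ) * ∑ i : Fin n₁, X (Sum.inl i)

/-- The polynomial `P₀`. -/
noncomputable def P0 (n₁ : ℕ) (K : ℝ) : MvPolynomial (Fin n₁ ⊕ Fin n₁) ℝ :=
  C (-(4/3) : ℝ) * (∑ i : Fin n₁, X (Sum.inl i) * (X (Sum.inr i)) ^ 2)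
  - C (2/3 : ℝ) * tauPoly n₁ * (∑ i : Fin n₁, (X (Sum.inr i)) ^ 2)
  + C (4/9 : ℝ) * (∑ i : Fin n₁, X (Sum.inr i))
      * (∑ i : Fin n₁, X (Sum.inl i) * X (Sum.inr i))
  + C (4/3 : ℝ) * tauPoly n₁ * (∑ i : Fin n₁, (X (Sum.inl i)) ^ 2)
  + C (2/9 : ℝ) * tauPoly n₁ * (∑ i : Fin n₁, X (Sum.inr i)) ^ 2
  + C (1/2 : ℝ) * (tauPoly n₁) ^ 3
  - C ((2/3) * (2 * ((n₁ : ℝ) + 1) + 1) * K) * tauPoly n₁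

/-- The sequence `P_k`, obtained by formally differentiating along the
polynomial vector field given by the right-hand sides of equations (i), (ii). -/
noncomputable def Pseq (n₁ : ℕ) (K : ℝ) : ℕ → MvPolynomial (Fin n₁ ⊕ Fin n₁) ℝ
  | 0 => P0 n₁ K
  | k + 1 =>
      (∑ i : Fin n₁, pderiv (Sum.inl i) (Pseq n₁ K k)
        * ((C (1/2 : ℝ) * tauPoly n₁ + X (Sum.inl i)) * X (Sum.inr i)))
      + ∑ i : Fin n₁, pderiv (Sum.inr i) (Pseq n₁ K k)
        * ((X (Sum.inr i)) ^ 2 - C (1/2 : ℝ) * tauPoly n₁ * X (Sum.inl i) + C K)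

/-!
Let `D` be the derivation of `ℝ[λ, μ]` sending `λᵢ`, `μᵢ` to the right-hand sides of (i), (ii),
so that `P_k = Dᵏ P₀`. Along a solution of (i), (ii) one has `d/dt Q(λ, μ) = (D Q)(λ, μ)`; as `τ`
is a polynomial, so are `τ'` and `τ''`, and the left-hand side of (iii) is exactly `P₀(λ, μ)`.
Hence along a solution of the whole system every `P_k` vanishes, in particular at `t = 0`.

Conversely, let `P_k(p) = 0` for all `k`. A weighted `ℓ¹` norm on coefficients shows that
`(Dᵏ Xᵢ)(p)` grows at most like `k! Cᵏ`, so the Lie series `xᵢ(t) = ∑ₖ (Dᵏ Xᵢ)(p) tᵏ / k!`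
converge near `0`. By the Leibniz rule for `Dᵏ`, `Q ↦ ∑ₖ (Dᵏ Q)(p) tᵏ / k!` is multiplicative, so
it equals `Q(x(t))`. For `Q = Xᵢ` this makes `x` an analytic solution of (i), (ii) with `x(0) = p`;
for `Q = P₀` it gives `P₀(x(t)) = ∑ₖ P_k(p) tᵏ / k! = 0`, which is (iii).
-/

open Finset Filter
open scoped Nat

section PowerSeries

open Metric

variable {a : ℕ → ℝ} {A C : ℝ}

theorem summable_norm_mul_pow_of_abs_le (hC : 0 < C) (ha : ∀ k, |a k| ≤ A * C ^ k) {t : ℝ}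
    (ht : |t| < C⁻¹) : Summable fun k => ‖a k * t ^ k‖ := by
  have hCt : C * |t| < 1 := by
    calc C * |t| < C * C⁻¹ := by gcongr
      _ = 1 := mul_inv_cancel₀ hC.ne'
  refine .of_nonneg_of_le (fun _ => norm_nonneg _) (fun k => ?_)
    ((summable_geometric_of_lt_one (by positivity) hCt).mul_left A)
  rw [norm_mul, norm_pow, Real.norm_eq_abs, Real.norm_eq_abs, mul_pow, ← mul_assoc]
  gcongr
  exact ha k

theorem norm_mul_natCast_mul_pow_pred_le (hC : 0 < C) (ha : ∀ k, |a k| ≤ A * C ^ k) {y : ℝ}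
    (hy : |y| < (4 * C)⁻¹) (k : ℕ) :
    ‖a k * (k * y ^ (k - 1))‖ ≤ 2 * A * C * (1 / 2) ^ k := by
  have hA : 0 ≤ A := (abs_nonneg _).trans (by simpa using ha 0)
  have hCy : 4 * C * |y| < 1 := by
    have h4C : 0 < 4 * C := by positivity
    calc 4 * C * |y| < 4 * C * (4 * C)⁻¹ := by gcongr
      _ = 1 := mul_inv_cancel₀ h4C.ne'
  rcases k with _ | m
  · simp only [CharP.cast_eq_zero, zero_mul, mul_zero, norm_zero]
    positivity
  -- `k ≤ 2 ^ (k - 1)` absorbs the factor `k`; this is why the radius is `(4 * C)⁻¹`.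
  have hm : ((m + 1 : ℕ) : ℝ) ≤ 2 ^ m := by exact_mod_cast Nat.lt_two_pow_self
  simp only [norm_mul, norm_pow, Real.norm_eq_abs, Nat.abs_cast, Nat.add_sub_cancel]
  calc |a (m + 1)| * (((m + 1 : ℕ) : ℝ) * |y| ^ m)
      ≤ A * C ^ (m + 1) * (2 ^ m * |y| ^ m) := by gcongr; exact ha _
    _ = A * C * (2 * (C * |y|)) ^ m := by ring
    _ ≤ A * C * (1 / 2) ^ m := by gcongr; nlinarith [abs_nonneg y]
    _ = 2 * A * C * (1 / 2) ^ (m + 1) := by ring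

theorem hasDerivAt_tsum_mul_pow (hC : 0 < C) (ha : ∀ k, |a k| ≤ A * C ^ k) {t : ℝ}
    (ht : |t| < (4 * C)⁻¹) :
    HasDerivAt (fun y => ∑' k, a k * y ^ k) (∑' k, (k + 1) * a (k + 1) * t ^ k) t := by
  have hbound : ∀ k, ∀ y ∈ ball (0 : ℝ) (4 * C)⁻¹,
      ‖a k * (k * y ^ (k - 1))‖ ≤ 2 * A * C * (1 / 2) ^ k := fun k y hy =>
    norm_mul_natCast_mul_pow_pred_le hC ha (by rwa [mem_ball_zero_iff, Real.norm_eq_abs] at hy) k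
  have ht' : t ∈ ball (0 : ℝ) (4 * C)⁻¹ := by rwa [mem_ball_zero_iff, Real.norm_eq_abs]
  have hsummable := summable_geometric_two.mul_left (2 * A * C)
  have hderiv := hasDerivAt_tsum_of_isPreconnected hsummable isOpen_ball
    (convex_ball _ _).isPreconnected (fun k y _ => (hasDerivAt_pow k y).const_mul (a k)) hbound ht'
    (summable_norm_mul_pow_of_abs_le hC ha (ht.trans_le (inv_anti₀ hC (by linarith)))).of_norm ht'
  rw [(Summable.of_norm_bounded hsummable fun k => hbound k t ht').tsum_eq_zero_add] at hderiv
  refine hderiv.congr_deriv ?_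
  simp only [CharP.cast_eq_zero, zero_mul, mul_zero, zero_add, Nat.add_sub_cancel,
    Nat.cast_add, Nat.cast_one]
  exact tsum_congr fun k => by ring

theorem analyticOnNhd_tsum_mul_pow (hC : 0 < C) (ha : ∀ k, |a k| ≤ A * C ^ k) :
    AnalyticOnNhd ℝ (fun y => ∑' k, a k * y ^ k) (ball 0 C⁻¹) := by
  set P := FormalMultilinearSeries.ofScalars ℝ a
  have hradius : ENNReal.ofReal C⁻¹ ≤ P.radius := by
    refine P.le_radius_of_bound A fun n => ?_
    rw [FormalMultilinearSeries.ofScalars_norm, Real.norm_eq_abs,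
      Real.coe_toNNReal _ (by positivity)]
    calc |a n| * C⁻¹ ^ n ≤ A * C ^ n * C⁻¹ ^ n := by gcongr; exact ha n
      _ = A := by rw [mul_assoc, ← mul_pow, mul_inv_cancel₀ hC.ne', one_pow, mul_one]
  have hsum : (fun y => ∑' k, a k * y ^ k) = P.sum := funext fun y =>
    (FormalMultilinearSeries.ofScalars_sum_eq a y).symm
  rw [hsum, ← eball_ofReal]
  exact P.analyticOnNhd.mono (eball_subset_eball hradius)

end PowerSeries

namespace Derivation

variable {R A : Type*} [CommSemiring R] [CommSemiring A] [Algebra R A]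

theorem iterate_apply_mul (D : Derivation R A A) (n : ℕ) (a b : A) :
    D^[n] (a * b) = ∑ ij ∈ antidiagonal n, n.choose ij.1 • (D^[ij.1] a * D^[ij.2] b) := by
  induction n with
  | zero => simp
  | succ n ih =>
    rw [sum_antidiagonal_choose_succ_nsmul (M := A) (fun i j => D^[i] a * D^[j] b) n]
    simp only [Function.iterate_succ_apply', ih, map_sum, map_nsmul, leibniz, smul_eq_mul,
      nsmul_add, sum_add_distrib]
    congr 1
    refine sum_congr rfl fun ⟨i, j⟩ hij => ?_
    rw [Nat.choose_symm_of_eq_add (mem_antidiagonal.1 hij).symm]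
    ring

end Derivation

namespace MvPolynomial

variable {σ : Type*}

theorem mkDerivation_eq_sum_pderiv {R : Type*} [CommSemiring R] [Fintype σ]
    (V : σ → MvPolynomial σ R) (Q : MvPolynomial σ R) :
    mkDerivation R V Q = ∑ i, pderiv i Q * V i := by
  classical
  have hsum : ∀ Q, (∑ i, V i • pderiv i) Q = ∑ i, V i * pderiv i Q := fun Q => by
    change Derivation.coeFnAddMonoidHom (∑ i, V i • pderiv i) Q = _
    simp [map_sum]
  have : mkDerivation R V = ∑ i, V i • pderiv i :=
    derivation_ext fun j => by simp [hsum, pderiv_X, Pi.single_apply]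
  simp [this, hsum, mul_comm]

section Solutions

def IsSolutionOn (V : σ → MvPolynomial σ ℝ) (x : σ → ℝ → ℝ) (U : Set ℝ) : Prop :=
  ∀ i, ∀ t ∈ U, HasDerivAt (x i) (eval (x · t) (V i)) t

variable {V : σ → MvPolynomial σ ℝ} {x : σ → ℝ → ℝ} {U : Set ℝ} {t : ℝ}

theorem hasDerivAt_eval_mkDerivation (hx : ∀ i, HasDerivAt (x i) (eval (x · t) (V i)) t)
    (Q : MvPolynomial σ ℝ) :
    HasDerivAt (fun s => eval (x · s) Q) (eval (x · t) (mkDerivation ℝ V Q)) t := by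
  induction Q using MvPolynomial.induction_on with
  | C a => simpa using hasDerivAt_const t a
  | add P W hP hW =>
    simp only [map_add]
    exact hP.add hW
  | mul_X P i hP =>
    simp only [map_mul, eval_X]
    refine (hP.fun_mul (hx i)).congr_deriv ?_
    simp only [Derivation.leibniz, mkDerivation_X, smul_eq_mul, map_add, map_mul, eval_X]
    ring

theorem IsSolutionOn.deriv_deriv_eval (hx : IsSolutionOn V x U) (hU : IsOpen U)
    (Q : MvPolynomial σ ℝ) (ht : t ∈ U) :
    deriv (deriv fun s => eval (x · s) Q) t =
      eval (x · t) (mkDerivation ℝ V (mkDerivation ℝ V Q)) := by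
  have hderiv : (deriv fun s => eval (x · s) Q) =ᶠ[nhds t]
      fun s => eval (x · s) (mkDerivation ℝ V Q) :=
    eventually_of_mem (hU.mem_nhds ht) fun s hs =>
      (hasDerivAt_eval_mkDerivation (fun i => hx i s hs) Q).deriv
  rw [hderiv.deriv_eq]
  exact (hasDerivAt_eval_mkDerivation (fun i => hx i t ht) _).deriv

theorem IsSolutionOn.eval_iterate_mkDerivation_eq_zero (hx : IsSolutionOn V x U)
    (hU : IsOpen U) {Q : MvPolynomial σ ℝ}
    (hQ : ∀ s ∈ U, eval (x · s) Q = 0) (k : ℕ) :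
    ∀ s ∈ U, eval (x · s) ((mkDerivation ℝ V)^[k] Q) = 0 := by
  induction k generalizing Q with
  | zero => exact hQ
  | succ k ih =>
    refine ih fun s hs => ?_
    have hzero : HasDerivAt (fun s => eval (x · s) Q) 0 s :=
      (hasDerivAt_const s 0).congr_of_eventuallyEq
        (eventually_of_mem (hU.mem_nhds hs) hQ)
    exact (hasDerivAt_eval_mkDerivation (fun i => hx i s hs) Q).unique hzero

end Solutions

section Degree

variable {R : Type*} [CommSemiring R]

theorem totalDegree_pderiv_le (i : σ) (Q : MvPolynomial σ R) :
    (pderiv i Q).totalDegree ≤ Q.totalDegree := by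
  conv_lhs => rw [Q.as_sum, map_sum]
  refine (totalDegree_finsetSum _ _).trans (Finset.sup_le fun α hα => ?_)
  rw [pderiv_monomial]
  refine (totalDegree_monomial_le _ _).trans ?_
  exact (Finsupp.degree_mono tsub_le_self).trans (le_totalDegree hα)

variable [Fintype σ] {V : σ → MvPolynomial σ R} {d : ℕ}

theorem totalDegree_mkDerivation_le (hV : ∀ i, (V i).totalDegree ≤ d) (Q : MvPolynomial σ R) :
    (mkDerivation R V Q).totalDegree ≤ Q.totalDegree + d := by
  rw [mkDerivation_eq_sum_pderiv]
  refine (totalDegree_finsetSum _ _).trans (Finset.sup_le fun i _ => ?_)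
  exact (totalDegree_mul _ _).trans (add_le_add (totalDegree_pderiv_le i Q) (hV i))

theorem totalDegree_iterate_mkDerivation_le (hV : ∀ i, (V i).totalDegree ≤ d)
    (Q : MvPolynomial σ R) (k : ℕ) :
    ((mkDerivation R V)^[k] Q).totalDegree ≤ Q.totalDegree + k * d := by
  induction k with
  | zero => simp
  | succ k ih =>
    rw [Function.iterate_succ_apply']
    refine (totalDegree_mkDerivation_le hV _).trans ?_
    rw [add_one_mul, ← add_assoc]
    exact Nat.add_le_add_right ih d

end Degree

section WeightedNorm

variable {r : ℝ}

noncomputable def weightedNorm (r : ℝ) (Q : MvPolynomial σ ℝ) : ℝ :=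
  ∑ α ∈ Q.support, |Q.coeff α| * r ^ α.degree

theorem weightedNorm_nonneg (hr : 0 ≤ r) (Q : MvPolynomial σ ℝ) : 0 ≤ weightedNorm r Q :=
  sum_nonneg fun _ _ => by positivity

theorem weightedNorm_eq_sum_of_support_subset {Q : MvPolynomial σ ℝ} {s : Finset (σ →₀ ℕ)}
    (h : Q.support ⊆ s) : weightedNorm r Q = ∑ α ∈ s, |Q.coeff α| * r ^ α.degree :=
  sum_subset h fun α _ hα => by simp [notMem_support_iff.mp hα]

theorem weightedNorm_monomial (r : ℝ) (α : σ →₀ ℕ) (c : ℝ) :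
    weightedNorm r (monomial α c) = |c| * r ^ α.degree := by
  classical
  by_cases hc : c = 0
  · simp [hc, weightedNorm]
  · simp [weightedNorm, support_monomial, hc]

theorem weightedNorm_X (r : ℝ) (i : σ) : weightedNorm r (X i : MvPolynomial σ ℝ) = r := by
  simp [X, weightedNorm_monomial, Finsupp.degree_single]

theorem weightedNorm_add_le (hr : 0 ≤ r) (Q W : MvPolynomial σ ℝ) :
    weightedNorm r (Q + W) ≤ weightedNorm r Q + weightedNorm r W := by
  classical
  rw [weightedNorm_eq_sum_of_support_subset support_add,
    weightedNorm_eq_sum_of_support_subset subset_union_left,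
    weightedNorm_eq_sum_of_support_subset subset_union_right, ← sum_add_distrib]
  refine sum_le_sum fun α _ => ?_
  rw [coeff_add, ← add_mul]
  gcongr
  exact abs_add_le _ _

theorem weightedNorm_sum_le (hr : 0 ≤ r) {ι : Type*} (s : Finset ι)
    (f : ι → MvPolynomial σ ℝ) :
    weightedNorm r (∑ i ∈ s, f i) ≤ ∑ i ∈ s, weightedNorm r (f i) :=
  le_sum_of_subadditive _ (by simp [weightedNorm]) (weightedNorm_add_le hr) s f

theorem weightedNorm_mul_le (hr : 0 ≤ r) (Q W : MvPolynomial σ ℝ) :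
    weightedNorm r (Q * W) ≤ weightedNorm r Q * weightedNorm r W := by
  conv_lhs => rw [Q.as_sum, W.as_sum, sum_mul_sum]
  simp_rw [monomial_mul]
  refine (weightedNorm_sum_le hr _ _).trans <|
    (sum_le_sum fun α _ => weightedNorm_sum_le hr _ _).trans ?_
  rw [weightedNorm, weightedNorm, sum_mul_sum]
  refine sum_le_sum fun α _ => sum_le_sum fun β _ => le_of_eq ?_
  rw [weightedNorm_monomial, abs_mul, map_add, pow_add]
  ring

theorem abs_eval_le_weightedNorm {p : σ → ℝ} (hp : ∀ i, |p i| ≤ r)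
    (Q : MvPolynomial σ ℝ) :
    |eval p Q| ≤ weightedNorm r Q := by
  rw [eval_eq]
  refine (abs_sum_le_sum_abs _ _).trans (sum_le_sum fun α _ => ?_)
  rw [abs_mul, abs_prod, Finsupp.degree_apply, ← prod_pow_eq_pow_sum]
  gcongr with i
  rw [abs_pow]
  exact pow_le_pow_left₀ (abs_nonneg _) (hp i) _

theorem weightedNorm_pderiv_le (hr : 1 ≤ r) (i : σ) (Q : MvPolynomial σ ℝ) :
    weightedNorm r (pderiv i Q) ≤ Q.totalDegree * weightedNorm r Q := by
  conv_lhs => rw [Q.as_sum, map_sum]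
  refine (weightedNorm_sum_le (by linarith) _ _).trans ?_
  rw [weightedNorm, mul_sum]
  refine sum_le_sum fun α hα => ?_
  rw [pderiv_monomial, weightedNorm_monomial, abs_mul, Nat.abs_cast]
  have hdeg : (α i : ℝ) ≤ Q.totalDegree := by
    exact_mod_cast (α.le_degree i).trans (le_totalDegree hα)
  have hpow : r ^ (α - Finsupp.single i 1).degree ≤ r ^ α.degree :=
    pow_le_pow_right₀ hr (Finsupp.degree_mono tsub_le_self)
  calc |Q.coeff α| * α i * r ^ (α - Finsupp.single i 1).degree
      ≤ |Q.coeff α| * Q.totalDegree * r ^ α.degree := by gcongr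
    _ = Q.totalDegree * (|Q.coeff α| * r ^ α.degree) := by ring

variable [Fintype σ] {V : σ → MvPolynomial σ ℝ} {d : ℕ}

theorem weightedNorm_mkDerivation_le (hr : 1 ≤ r) (Q : MvPolynomial σ ℝ) :
    weightedNorm r (mkDerivation ℝ V Q) ≤
      Q.totalDegree * (∑ i, weightedNorm r (V i)) * weightedNorm r Q := by
  have hr0 : 0 ≤ r := by linarith
  rw [mkDerivation_eq_sum_pderiv, mul_sum, sum_mul]
  refine (weightedNorm_sum_le hr0 _ _).trans (sum_le_sum fun i _ => ?_)
  calc weightedNorm r (pderiv i Q * V i)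
      ≤ weightedNorm r (pderiv i Q) * weightedNorm r (V i) := weightedNorm_mul_le hr0 _ _
    _ ≤ Q.totalDegree * weightedNorm r Q * weightedNorm r (V i) := by
        gcongr
        · exact weightedNorm_nonneg hr0 _
        · exact weightedNorm_pderiv_le hr i Q
    _ = _ := by ring

theorem weightedNorm_iterate_mkDerivation_le (hr : 1 ≤ r) (hV : ∀ i, (V i).totalDegree ≤ d)
    {Q : MvPolynomial σ ℝ} (hQ : Q.totalDegree ≤ d) (k : ℕ) :
    weightedNorm r ((mkDerivation ℝ V)^[k] Q) ≤
      k ! * (d * ∑ i, weightedNorm r (V i)) ^ k * weightedNorm r Q := by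
  have hr0 : 0 ≤ r := by linarith
  have hM : 0 ≤ ∑ i, weightedNorm r (V i) := sum_nonneg fun i _ => weightedNorm_nonneg hr0 _
  induction k with
  | zero => simp
  | succ k ih =>
    have hdeg : ((((mkDerivation ℝ V)^[k] Q).totalDegree : ℕ) : ℝ) ≤ (k + 1) * d := by
      exact_mod_cast (totalDegree_iterate_mkDerivation_le hV Q k).trans (by nlinarith)
    rw [Function.iterate_succ_apply']
    refine (weightedNorm_mkDerivation_le hr _).trans ?_
    calc _ ≤ (k + 1) * d * (∑ i, weightedNorm r (V i)) *
          (k ! * (d * ∑ i, weightedNorm r (V i)) ^ k * weightedNorm r Q) := by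
          gcongr
          exact weightedNorm_nonneg hr0 _
      _ = _ := by push_cast [Nat.factorial_succ]; ring

end WeightedNorm

section LieSeries

variable (V : σ → MvPolynomial σ ℝ) (p : σ → ℝ)

noncomputable def lieCoeff (Q : MvPolynomial σ ℝ) (k : ℕ) : ℝ :=
  eval p ((mkDerivation ℝ V)^[k] Q) / k !

noncomputable def lieSeries (Q : MvPolynomial σ ℝ) (t : ℝ) : ℝ :=
  ∑' k, lieCoeff V p Q k * t ^ k

variable {V p}

theorem lieCoeff_zero_right (Q : MvPolynomial σ ℝ) : lieCoeff V p Q 0 = eval p Q := by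
  simp [lieCoeff]

theorem lieCoeff_add (Q W : MvPolynomial σ ℝ) (k : ℕ) :
    lieCoeff V p (Q + W) k = lieCoeff V p Q k + lieCoeff V p W k := by
  simp [lieCoeff, iterate_map_add, add_div]

theorem lieCoeff_C (c : ℝ) (k : ℕ) : lieCoeff V p (C c) k = if k = 0 then c else 0 := by
  rcases k with _ | k
  · simp [lieCoeff]
  · simp [lieCoeff, derivation_C, iterate_map_zero]

theorem lieCoeff_mkDerivation (Q : MvPolynomial σ ℝ) (k : ℕ) :
    lieCoeff V p (mkDerivation ℝ V Q) k = (k + 1) * lieCoeff V p Q (k + 1) := by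
  rw [lieCoeff, lieCoeff, ← Function.iterate_succ_apply, Nat.factorial_succ]
  push_cast
  field_simp

theorem lieCoeff_mul (Q W : MvPolynomial σ ℝ) (n : ℕ) :
    lieCoeff V p (Q * W) n =
      ∑ ij ∈ antidiagonal n, lieCoeff V p Q ij.1 * lieCoeff V p W ij.2 := by
  rw [lieCoeff, Derivation.iterate_apply_mul, map_sum, sum_div]
  refine sum_congr rfl fun ⟨i, j⟩ hij => ?_
  rw [HasAntidiagonal.mem_antidiagonal] at hij
  subst hij
  have hfact : ((i + j) ! : ℝ) = (i + j).choose i * i ! * j ! := by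
    rw [Nat.choose_symm_add]
    exact_mod_cast (Nat.add_choose_mul_factorial_mul_factorial i j).symm
  have hchoose : ((i + j).choose i : ℝ) ≠ 0 :=
    Nat.cast_ne_zero.2 (Nat.choose_pos (by omega)).ne'
  simp only [lieCoeff, map_mul, nsmul_eq_mul, map_natCast, hfact]
  field_simp

variable {t : ℝ}

theorem lieCoeff_mul_mul_pow (Q W : MvPolynomial σ ℝ) (n : ℕ) :
    lieCoeff V p (Q * W) n * t ^ n =
      ∑ ij ∈ antidiagonal n,
        lieCoeff V p Q ij.1 * t ^ ij.1 * (lieCoeff V p W ij.2 * t ^ ij.2) := by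
  rw [lieCoeff_mul, sum_mul]
  refine sum_congr rfl fun ij hij => ?_
  rw [← HasAntidiagonal.mem_antidiagonal.1 hij, pow_add]
  ring

theorem summable_lieCoeff_mul {Q W : MvPolynomial σ ℝ}
    (hQ : Summable fun k => ‖lieCoeff V p Q k * t ^ k‖)
    (hW : Summable fun k => ‖lieCoeff V p W k * t ^ k‖) :
    Summable fun k => ‖lieCoeff V p (Q * W) k * t ^ k‖ := by
  simpa only [lieCoeff_mul_mul_pow] using summable_norm_sum_mul_antidiagonal_of_summable_norm hQ hW

theorem lieSeries_mul {Q W : MvPolynomial σ ℝ}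
    (hQ : Summable fun k => ‖lieCoeff V p Q k * t ^ k‖)
    (hW : Summable fun k => ‖lieCoeff V p W k * t ^ k‖) :
    lieSeries V p (Q * W) t = lieSeries V p Q t * lieSeries V p W t := by
  simp only [lieSeries, tsum_mul_tsum_eq_tsum_sum_antidiagonal_of_summable_norm hQ hW,
    lieCoeff_mul_mul_pow]

theorem lieSeries_add {Q W : MvPolynomial σ ℝ}
    (hQ : Summable fun k => ‖lieCoeff V p Q k * t ^ k‖)
    (hW : Summable fun k => ‖lieCoeff V p W k * t ^ k‖) :
    lieSeries V p (Q + W) t = lieSeries V p Q t + lieSeries V p W t := by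
  simp only [lieSeries, lieCoeff_add, add_mul]
  exact hQ.of_norm.tsum_add hW.of_norm

theorem lieSeries_C (c t : ℝ) : lieSeries V p (C c) t = c := by
  rw [lieSeries, tsum_eq_single 0 fun k hk => by simp [lieCoeff_C, hk]]
  simp [lieCoeff_C]

theorem lieSeries_zero_right (Q : MvPolynomial σ ℝ) : lieSeries V p Q 0 = eval p Q := by
  rw [lieSeries, tsum_eq_single 0 fun k hk => by simp [hk]]
  simp [lieCoeff_zero_right]

theorem summable_lieCoeff_of_summable_lieCoeff_X
    (hX : ∀ i, Summable fun k => ‖lieCoeff V p (X i) k * t ^ k‖) (Q : MvPolynomial σ ℝ) :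
    Summable fun k => ‖lieCoeff V p Q k * t ^ k‖ := by
  induction Q using MvPolynomial.induction_on with
  | C c =>
    refine summable_of_ne_finset_zero (s := {0}) fun k hk => ?_
    simp_all [lieCoeff_C]
  | add Q W hQ hW =>
    refine .of_nonneg_of_le (fun _ => norm_nonneg _) (fun k => ?_) (hQ.add hW)
    rw [lieCoeff_add, add_mul]
    exact norm_add_le _ _
  | mul_X Q i hQ => exact summable_lieCoeff_mul hQ (hX i)

theorem eval_lieSeries_X (hX : ∀ i, Summable fun k => ‖lieCoeff V p (X i) k * t ^ k‖)
    (Q : MvPolynomial σ ℝ) : eval (fun i => lieSeries V p (X i) t) Q = lieSeries V p Q t := by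
  have hsum := summable_lieCoeff_of_summable_lieCoeff_X hX
  induction Q using MvPolynomial.induction_on with
  | C c => rw [eval_C, lieSeries_C]
  | add Q W hQ hW => rw [map_add, hQ, hW, lieSeries_add (hsum Q) (hsum W)]
  | mul_X Q i hQ => rw [map_mul, hQ, eval_X, lieSeries_mul (hsum Q) (hsum _)]

variable [Fintype σ] (V p)

theorem exists_geometric_bound_lieCoeff_X :
    ∃ A C : ℝ, 0 < C ∧ ∀ i k, |lieCoeff V p (X i) k| ≤ A * C ^ k := by
  set r := 1 + ∑ i, |p i|
  have hr : 1 ≤ r := le_add_of_nonneg_right (sum_nonneg fun _ _ => abs_nonneg _)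
  have hp : ∀ i, |p i| ≤ r := fun i =>
    (single_le_sum (fun j _ => abs_nonneg (p j)) (mem_univ i)).trans
      (le_add_of_nonneg_left zero_le_one)
  set d := max 1 (univ.sup fun i => (V i).totalDegree)
  have hV : ∀ i, (V i).totalDegree ≤ d := fun i =>
    (le_sup (f := fun i => (V i).totalDegree) (mem_univ i)).trans (le_max_right _ _)
  set M := d * ∑ i, weightedNorm r (V i)
  have hM : 0 ≤ M := mul_nonneg (Nat.cast_nonneg d)
    (sum_nonneg fun i _ => weightedNorm_nonneg (by linarith) _)
  refine ⟨r, M + 1, by positivity, fun i k => ?_⟩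
  have hX : (X i : MvPolynomial σ ℝ).totalDegree ≤ d :=
    (totalDegree_X i).trans_le (le_max_left _ _)
  rw [lieCoeff, abs_div, Nat.abs_cast, div_le_iff₀ (by positivity)]
  calc |eval p ((mkDerivation ℝ V)^[k] (X i))|
      ≤ k ! * M ^ k * weightedNorm r (X i) :=
        (abs_eval_le_weightedNorm hp _).trans (weightedNorm_iterate_mkDerivation_le hr hV hX k)
    _ = r * M ^ k * k ! := by rw [weightedNorm_X]; ring
    _ ≤ r * (M + 1) ^ k * k ! := by gcongr; linarith

theorem exists_analyticOnNhd_isSolutionOn :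
    ∃ ε > 0, ∃ x : σ → ℝ → ℝ,
      (∀ i, AnalyticOnNhd ℝ (x i) (Set.Ioo (-ε) ε)) ∧ (∀ i, x i 0 = p i) ∧
      IsSolutionOn V x (Set.Ioo (-ε) ε) ∧
      ∀ Q, ∀ t ∈ Set.Ioo (-ε) ε, eval (x · t) Q = lieSeries V p Q t := by
  obtain ⟨A, C, hC, hbound⟩ := exists_geometric_bound_lieCoeff_X V p
  have hradius : (4 * C)⁻¹ < C⁻¹ := inv_strictAnti₀ hC (by linarith)
  have hsum : ∀ t ∈ Set.Ioo (-(4 * C)⁻¹) (4 * C)⁻¹, ∀ i,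
      Summable fun k => ‖lieCoeff V p (X i) k * t ^ k‖ := fun t ht i =>
    summable_norm_mul_pow_of_abs_le hC (hbound i) ((abs_lt.2 ht).trans hradius)
  refine ⟨(4 * C)⁻¹, by positivity, fun i => lieSeries V p (X i), fun i => ?_, fun i => ?_,
    fun i t ht => ?_, fun Q t ht => eval_lieSeries_X (hsum t ht) Q⟩
  · refine (analyticOnNhd_tsum_mul_pow hC (hbound i)).mono fun t ht => ?_
    rw [Metric.mem_ball, Real.dist_0_eq_abs]
    exact (abs_lt.2 ht).trans hradius
  · exact (lieSeries_zero_right _).trans (eval_X _)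
  · rw [eval_lieSeries_X (hsum t ht), ← mkDerivation_X ℝ V i, lieSeries]
    simp only [lieCoeff_mkDerivation]
    exact hasDerivAt_tsum_mul_pow hC (hbound i) (abs_lt.2 ht)

end LieSeries

end MvPolynomial

section LambdaMuSystem

noncomputable def odeField (n₁ : ℕ) (K : ℝ) :
    Fin n₁ ⊕ Fin n₁ → MvPolynomial (Fin n₁ ⊕ Fin n₁) ℝ :=
  Sum.elim (fun i => (C (1/2 : ℝ) * tauPoly n₁ + X (Sum.inl i)) * X (Sum.inr i))
    (fun i => X (Sum.inr i) ^ 2 - C (1/2 : ℝ) * tauPoly n₁ * X (Sum.inl i) + C K)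

variable {n₁ : ℕ} {K : ℝ}

theorem Pseq_eq_iterate_mkDerivation (k : ℕ) :
    Pseq n₁ K k = (mkDerivation ℝ (odeField n₁ K))^[k] (P0 n₁ K) := by
  induction k with
  | zero => rfl
  | succ k ih =>
    rw [Function.iterate_succ_apply', ← ih, mkDerivation_eq_sum_pderiv, Fintype.sum_sum_type]
    rfl

theorem eval_odeField_inl (y : Fin n₁ ⊕ Fin n₁ → ℝ) (i : Fin n₁) :
    eval y (odeField n₁ K (Sum.inl i)) =
      ((2/3) * (∑ j, y (Sum.inl j)) / 2 + y (Sum.inl i)) * y (Sum.inr i) := by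
  simp only [odeField, tauPoly, Sum.elim_inl, map_mul, map_add, eval_C, eval_X, map_sum]
  ring

theorem eval_odeField_inr (y : Fin n₁ ⊕ Fin n₁ → ℝ) (i : Fin n₁) :
    eval y (odeField n₁ K (Sum.inr i)) =
      y (Sum.inr i) ^ 2 - (2/3) * (∑ j, y (Sum.inl j)) / 2 * y (Sum.inl i) + K := by
  simp only [odeField, tauPoly, Sum.elim_inr, map_mul, map_add, map_sub, map_pow, eval_C, eval_X,
    map_sum]
  ring

theorem isSolutionOn_odeField_iff {U : Set ℝ} {lam mu : Fin n₁ → ℝ → ℝ} :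
    IsSolutionOn (odeField n₁ K) (Sum.elim lam mu) U ↔
      (∀ i, ∀ t ∈ U,
        HasDerivAt (lam i) ((((2/3) * ∑ j, lam j t) / 2 + lam i t) * mu i t) t) ∧
      (∀ i, ∀ t ∈ U,
        HasDerivAt (mu i) ((mu i t) ^ 2 - ((2/3) * ∑ j, lam j t) / 2 * lam i t + K) t) := by
  simp only [IsSolutionOn, Sum.forall, Sum.elim_inl, Sum.elim_inr, eval_odeField_inl,
    eval_odeField_inr]

theorem eval_tauEquation (l m : Fin n₁ → ℝ) :
    -eval (Sum.elim l m)
          (mkDerivation ℝ (odeField n₁ K) (mkDerivation ℝ (odeField n₁ K) (tauPoly n₁)))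
        + eval (Sum.elim l m) (mkDerivation ℝ (odeField n₁ K) (tauPoly n₁)) * ∑ i, m i
        + ((2/3) * ∑ j, l j)
          * (((2/3) * ∑ j, l j) ^ 2 / 4 - ((n₁ : ℝ) + 1) * K + ∑ i, l i ^ 2) =
      eval (Sum.elim l m) (P0 n₁ K) := by
  simp only [tauPoly, P0, odeField, Derivation.leibniz, mkDerivation_X, derivation_C, smul_eq_mul,
    Sum.elim_inl, Sum.elim_inr, eval_C, eval_X, map_mul, map_add, map_sub, map_pow, map_sum,
    mul_zero, add_zero]
  have h1 : ∀ a : ℝ, ∑ x, (a + l x) * m x = a * ∑ x, m x + ∑ x, l x * m x := fun a => by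
    simp [add_mul, sum_add_distrib, mul_sum]
  have h2 : ∀ a b : ℝ,
      ∑ x, ((a + l x) * (m x ^ 2 - a * l x + K) + m x * (b + (a + l x) * m x)) =
      2 * a * ∑ x, m x ^ 2 + 2 * ∑ x, l x * m x ^ 2 - a ^ 2 * ∑ x, l x - a * ∑ x, l x ^ 2
        + K * ∑ x, l x + n₁ * (a * K) + b * ∑ x, m x := fun a b => by
    have hterm : ∀ x, (a + l x) * (m x ^ 2 - a * l x + K) + m x * (b + (a + l x) * m x) =
        2 * a * m x ^ 2 + 2 * (l x * m x ^ 2) - a ^ 2 * l x - a * l x ^ 2 + K * l x + a * K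
          + b * m x := fun x => by ring
    simp [hterm, sum_add_distrib, sum_sub_distrib, mul_sum]
  rw [h2, h1]
  ring

theorem tauEquation_eq_eval_P0 {U : Set ℝ} (hU : IsOpen U) {lam mu : Fin n₁ → ℝ → ℝ}
    (hsol : IsSolutionOn (odeField n₁ K) (Sum.elim lam mu) U) {t : ℝ} (ht : t ∈ U) :
    -(deriv (deriv (fun s => (2/3) * ∑ j, lam j s)) t)
        + deriv (fun s => (2/3) * ∑ j, lam j s) t * (∑ i, mu i t)
        + ((2/3) * ∑ j, lam j t)
          * (((2/3) * ∑ j, lam j t) ^ 2 / 4 - ((n₁ : ℝ) + 1) * K + ∑ i, (lam i t) ^ 2) =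
      eval (Sum.elim lam mu · t) (P0 n₁ K) := by
  have htau :
      (fun s => (2/3) * ∑ j, lam j s) = fun s => eval (Sum.elim lam mu · s) (tauPoly n₁) := by
    funext s
    simp [tauPoly]
  have hpoint : (Sum.elim lam mu · t) = Sum.elim (lam · t) (mu · t) := by
    funext v
    cases v <;> rfl
  rw [htau, hsol.deriv_deriv_eval hU _ ht,
    (hasDerivAt_eval_mkDerivation (fun v => hsol v t ht) _).deriv, hpoint]
  exact eval_tauEquation _ _

end LambdaMuSystem

theorem stmt_16_general (n₁ : ℕ) (K : ℝ) :
    {p : (Fin n₁ → ℝ) × (Fin n₁ → ℝ) |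
      ∃ ε > (0 : ℝ), ∃ lam mu : Fin n₁ → ℝ → ℝ,
        (∀ i, AnalyticOnNhd ℝ (lam i) (Set.Ioo (-ε) ε)) ∧
        (∀ i, AnalyticOnNhd ℝ (mu i) (Set.Ioo (-ε) ε)) ∧
        (∀ i, ∀ t ∈ Set.Ioo (-ε) ε,
          HasDerivAt (lam i)
            ((((2/3) * ∑ j, lam j t) / 2 + lam i t) * mu i t) t) ∧
        (∀ i, ∀ t ∈ Set.Ioo (-ε) ε,
          HasDerivAt (mu i)
            ((mu i t) ^ 2 - ((2/3) * ∑ j, lam j t) / 2 * lam i t + K) t) ∧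
        (∀ t ∈ Set.Ioo (-ε) ε,
          -(deriv (deriv (fun s => (2/3) * ∑ j, lam j s)) t)
            + deriv (fun s => (2/3) * ∑ j, lam j s) t * (∑ i, mu i t)
            + ((2/3) * ∑ j, lam j t)
              * (((2/3) * ∑ j, lam j t) ^ 2 / 4 - ((n₁ : ℝ) + 1) * K
                  + ∑ i, (lam i t) ^ 2) = 0) ∧
        (∀ i, lam i 0 = p.1 i ∧ mu i 0 = p.2 i)} =
    ⋂ k : ℕ, {p : (Fin n₁ → ℝ) × (Fin n₁ → ℝ) |
      eval (Sum.elim p.1 p.2) (Pseq n₁ K k) = 0} := by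
  ext ⟨l₀, m₀⟩
  simp only [Set.mem_ofPred_eq, Set.mem_iInter]
  constructor
  · rintro ⟨ε, hε, lam, mu, -, -, hlam, hmu, htau, hinit⟩ k
    have hsol := isSolutionOn_odeField_iff.2 ⟨hlam, hmu⟩
    have hP0 : ∀ s ∈ Set.Ioo (-ε) ε, eval (Sum.elim lam mu · s) (P0 n₁ K) = 0 :=
      fun s hs =>
        (tauEquation_eq_eval_P0 isOpen_Ioo hsol hs).symm.trans (htau s hs)
    have hstart : (Sum.elim lam mu · 0) = Sum.elim l₀ m₀ := by
      funext v
      cases v <;> simp [hinit]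
    rw [Pseq_eq_iterate_mkDerivation, ← hstart]
    exact hsol.eval_iterate_mkDerivation_eq_zero isOpen_Ioo hP0 k 0 ⟨by linarith, hε⟩
  · intro hP
    obtain ⟨ε, hε, x, hanalytic, hstart, hsol, hlieSeries⟩ :=
      exists_analyticOnNhd_isSolutionOn (odeField n₁ K) (Sum.elim l₀ m₀)
    have hx : Sum.elim (fun i => x (.inl i)) (fun i => x (.inr i)) = x := Sum.elim_comp_inl_inr x
    rw [← hx] at hsol
    obtain ⟨hlam, hmu⟩ := isSolutionOn_odeField_iff.1 hsol
    refine ⟨ε, hε, fun i => x (.inl i), fun i => x (.inr i), fun i => hanalytic _,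
      fun i => hanalytic _, hlam, hmu, fun t ht => ?_, fun i => ⟨hstart _, hstart _⟩⟩
    rw [tauEquation_eq_eval_P0 isOpen_Ioo hsol ht, hx, hlieSeries _ t ht]
    simp [lieSeries, lieCoeff, ← Pseq_eq_iterate_mkDerivation, hP]

/-- The set `S` of initial values of the ODE system coincides with the
algebraic set `⋂ₖ P_k⁻¹(0)`. -/
theorem stmt_16 (n₁ : ℕ) (hn : 1 ≤ n₁) (K : ℝ) :
    {p : (Fin n₁ → ℝ) × (Fin n₁ → ℝ) |
      ∃ ε > (0 : ℝ), ∃ lam mu : Fin n₁ → ℝ → ℝ,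
        (∀ i, AnalyticOnNhd ℝ (lam i) (Set.Ioo (-ε) ε)) ∧
        (∀ i, AnalyticOnNhd ℝ (mu i) (Set.Ioo (-ε) ε)) ∧
        (∀ i, ∀ t ∈ Set.Ioo (-ε) ε,
          HasDerivAt (lam i)
            ((((2/3) * ∑ j, lam j t) / 2 + lam i t) * mu i t) t) ∧
        (∀ i, ∀ t ∈ Set.Ioo (-ε) ε,
          HasDerivAt (mu i)
            ((mu i t) ^ 2 - ((2/3) * ∑ j, lam j t) / 2 * lam i t + K) t) ∧
        (∀ t ∈ Set.Ioo (-ε) ε,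
          -(deriv (deriv (fun s => (2/3) * ∑ j, lam j s)) t)
            + deriv (fun s => (2/3) * ∑ j, lam j s) t * (∑ i, mu i t)
            + ((2/3) * ∑ j, lam j t)
              * (((2/3) * ∑ j, lam j t) ^ 2 / 4 - ((n₁ : ℝ) + 1) * K
                  + ∑ i, (lam i t) ^ 2) = 0) ∧
        (∀ i, lam i 0 = p.1 i ∧ mu i 0 = p.2 i)} =
    ⋂ k : ℕ, {p : (Fin n₁ → ℝ) × (Fin n₁ → ℝ) |
      eval (Sum.elim p.1 p.2) (Pseq n₁ K k) = 0} :=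
  stmt_16_general n₁ K
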